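/- arXiv:1504.02607 — 5 statements merged into one kernel-verified Lean document; each statement's English description precedes it below -/
import Mathlib

section
/- Let n ≥ 1, let V ⊂ ℝⁿ be a hyperplane (a linear subspace of dimension n−1), and let u, v₁, …, vₙ ∈ ℝⁿ be vectors all lying in the same connected component of ℝⁿ ∖ V. Suppose that v₁, …, vₙ are linearly independent and that u does not belong to the convex cone {a₁v₁ + ⋯ + aₙvₙ : a₁, …, aₙ ≥ 0}. Then there is no positive definite symmetric bilinear form ⟨·,·⟩ on ℝⁿ such that ⟨u, x⟩ = 0 for all x ∈ V and ⟨vᵢ, vⱼ⟩ = 0 for all i ≠ j. -/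
/-!
Expand `u = ∑ aᵢ vᵢ` in the basis `v`; since `u` is outside the cone, some `aⱼ < 0`, and
orthogonality of the `vᵢ` gives `⟨u, vⱼ⟩ = aⱼ ⟨vⱼ, vⱼ⟩ < 0`. On the other hand `⟨u, ·⟩` vanishes on
`V = ker f`, so it is a multiple of `f`: `f(u) ⟨u, vⱼ⟩ = f(vⱼ) ⟨u, u⟩`, where the left side is
negative and the right side positive.
-/

theorem exists_neg_coeff_of_mem_span_of_notMem_cone {R M ι : Type*} [Fintype ι] [Semiring R]
    [LinearOrder R] [AddCommMonoid M] [Module R M] {v : ι → M} {u : M}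
    (hspan : u ∈ Submodule.span R (Set.range v))
    (hcone : ¬ ∃ a : ι → R, (∀ i, 0 ≤ a i) ∧ u = ∑ i, a i • v i) :
    ∃ a : ι → R, u = ∑ i, a i • v i ∧ ∃ j, a j < 0 := by
  obtain ⟨a, hau⟩ := Submodule.mem_span_range_iff_exists_fun R |>.mp hspan
  refine ⟨a, hau.symm, ?_⟩
  by_contra! hnonneg
  exact hcone ⟨a, hnonneg, hau.symm⟩

theorem LinearMap.IsOrthoᵢ.apply_sum_smul_left {R M N ι : Type*} [Fintype ι] [CommSemiring R]
    [AddCommMonoid M] [Module R M] [AddCommMonoid N] [Module R N] {B : M →ₗ[R] M →ₗ[R] N}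
    {v : ι → M} (hv : B.IsOrthoᵢ v) (a : ι → R) (j : ι) :
    B (∑ i, a i • v i) (v j) = a j • B (v j) (v j) := by
  simp only [B.map_sum₂, LinearMap.map_smul₂]
  refine Finset.sum_eq_single_of_mem j (Finset.mem_univ j) fun i _ hij ↦ ?_
  rw [hv hij, smul_zero]

theorem LinearMap.mul_apply_eq_mul_apply_of_ker_le {R M : Type*} [CommRing R] [AddCommGroup M]
    [Module R M] {f g : M →ₗ[R] R} (hfg : LinearMap.ker f ≤ LinearMap.ker g) (x y : M) :
    f x * g y = f y * g x := by
  have hmem : f x • y - f y • x ∈ LinearMap.ker f := by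
    simp only [LinearMap.mem_ker, map_sub, map_smul, smul_eq_mul]
    ring
  have := hfg hmem
  simp only [LinearMap.mem_ker, map_sub, map_smul, smul_eq_mul] at this
  exact sub_eq_zero.mp this

theorem no_inner_product_orthogonalizing_general (n : ℕ)
    (V : Submodule ℝ (Fin n → ℝ))
    (u : Fin n → ℝ) (v : Fin n → (Fin n → ℝ))
    (f : (Fin n → ℝ) →ₗ[ℝ] ℝ) (hker : LinearMap.ker f = V)
    (hu : 0 < f u) (hvpos : ∀ i, 0 < f (v i))
    (hind : LinearIndependent ℝ v)
    (hcone : ¬ ∃ a : Fin n → ℝ, (∀ i, 0 ≤ a i) ∧ u = ∑ i, a i • v i) :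
    ¬ ∃ B : LinearMap.BilinForm ℝ (Fin n → ℝ),
        (∀ x y, B x y = B y x) ∧ (∀ x, x ≠ 0 → 0 < B x x) ∧
        (∀ x ∈ V, B u x = 0) ∧
        (∀ i j, i ≠ j → B (v i) (v j) = 0) := by
  rintro ⟨B, -, hpos, huV, horth⟩
  have hspan : u ∈ Submodule.span ℝ (Set.range v) := by
    rw [hind.span_eq_top_of_card_eq_finrank' (by simp)]
    exact Submodule.mem_top
  obtain ⟨a, hua, j, hj⟩ := exists_neg_coeff_of_mem_span_of_notMem_cone hspan hcone
  have huvj : B u (v j) < 0 := by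
    rw [hua, (LinearMap.isOrthoᵢ_def.mpr horth).apply_sum_smul_left, smul_eq_mul]
    exact mul_neg_of_neg_of_pos hj (hpos _ (ne_zero_of_map (hvpos j).ne'))
  have huu : 0 < B u u := hpos u (ne_zero_of_map hu.ne')
  have hker_le : LinearMap.ker f ≤ LinearMap.ker (B u) := hker ▸ huV
  have := LinearMap.mul_apply_eq_mul_apply_of_ker_le hker_le u (v j)
  linarith [mul_neg_of_pos_of_neg hu huvj, mul_pos (hvpos j) huu]

/-- Let `V ⊂ ℝⁿ` be a hyperplane and let `u, v₁, …, vₙ` lie in the same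
connected component of `ℝⁿ ∖ V` (expressed via a linear functional `f` with kernel `V` that is
positive on all of them).  If `v₁, …, vₙ` are linearly independent and `u` is not in the convex
cone spanned by them, then there is no positive definite symmetric bilinear form for which
`u ⟂ V` and the `vᵢ` are mutually orthogonal. -/
theorem no_inner_product_orthogonalizing (n : ℕ) (hn : 1 ≤ n)
    (V : Submodule ℝ (Fin n → ℝ)) (hV : Module.finrank ℝ V = n - 1)
    (u : Fin n → ℝ) (v : Fin n → (Fin n → ℝ))
    (f : (Fin n → ℝ) →ₗ[ℝ] ℝ) (hf : f ≠ 0) (hker : LinearMap.ker f = V)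
    (hu : 0 < f u) (hvpos : ∀ i, 0 < f (v i))
    (hind : LinearIndependent ℝ v)
    (hcone : ¬ ∃ a : Fin n → ℝ, (∀ i, 0 ≤ a i) ∧ u = ∑ i, a i • v i) :
    ¬ ∃ B : LinearMap.BilinForm ℝ (Fin n → ℝ),
        (∀ x y, B x y = B y x) ∧ (∀ x, x ≠ 0 → 0 < B x x) ∧
        (∀ x ∈ V, B u x = 0) ∧
        (∀ i j, i ≠ j → B (v i) (v j) = 0) :=
  no_inner_product_orthogonalizing_general n V u v f hker hu hvpos hind hcone
end

section
/- Let 1 ≤ p ≤ q and n = p + q, and let 𝒬 be the quadratic form 𝒬(v) = vᵀQ_{p,q}v on ℝⁿ. Let V ⊂ ℝⁿ be a hyperplane such that ℝⁿ = V ⊕ L, where L is the 𝒬-orthogonal complement of V, and suppose 𝒬 is positive on L ∖ {0}. Let ℝⁿ = P₁ ⊕ ⋯ ⊕ P_p ⊕ P_rest be a 𝒬-orthogonal direct sum decomposition in which each P_i is 2-dimensional and 𝒬 restricted to P_i has signature (1,1). Then there exists a p-dimensional subspace W ⊆ ℝⁿ such that 𝒬 is negative definite on W, W ⊆ V, and dim(W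 ∩ P_i) = 1 for all i = 1, …, p, if and only if for every i = 1, …, p there exists v_i ∈ P_i ∩ V with 𝒬(v_i) < 0. -/
/-!
Negative vectors `vᵢ ∈ Pᵢ ∩ V` are pairwise `𝒬`-orthogonal, so `𝒬(∑ cᵢ vᵢ) = ∑ cᵢ² 𝒬(vᵢ) < 0`
unless all `cᵢ` vanish, and their span `W ⊆ V` is negative definite. Since the `Pᵢ` are
independent, the modular law gives `W ∩ Pᵢ = ℝ vᵢ`. Conversely, any nonzero vector of `W ∩ Pᵢ`
is a negative vector of `Pᵢ ∩ V`.
-/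

open Matrix

/-- The matrix `Q_{p,q} = diag(−Id_p, Id_q)` on `ℝ^{p+q}`. -/
noncomputable def Qpq (p q : ℕ) : Matrix (Fin (p + q)) (Fin (p + q)) ℝ :=
  Matrix.diagonal (fun i => if (i : ℕ) < p then -1 else 1)

theorem iSupIndep.iSup_inf_eq_of_le {α ι : Type*} [CompleteLattice α] [IsModularLattice α]
    {t a : ι → α} (ht : iSupIndep t) (hat : a ≤ t) (i : ι) : (⨆ j, a j) ⊓ t i = a i := by
  have hdisj : (⨆ (j) (_ : j ≠ i), a j) ⊓ t i = ⊥ :=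
    ((ht i).symm.mono_left (iSup₂_mono fun j _ => hat j)).eq_bot
  rw [iSup_split_single a i, sup_inf_assoc_of_le _ (hat i), hdisj, sup_bot_eq]

theorem iSupIndep.span_range_inf_eq {ι R M : Type*} [Ring R] [AddCommGroup M] [Module R M]
    {t : ι → Submodule R M} (ht : iSupIndep t) {v : ι → M} (hv : ∀ i, v i ∈ t i) (i : ι) :
    Submodule.span R (Set.range v) ⊓ t i = R ∙ v i := by
  rw [Submodule.span_range_eq_iSup]
  exact ht.iSup_inf_eq_of_le (fun j => (Submodule.span_singleton_le_iff_mem _ _).2 (hv j)) i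

namespace LinearMap.BilinForm

theorem apply_sum_smul_self_of_isOrthoᵢ {ι R M : Type*} [Fintype ι] [CommRing R]
    [AddCommGroup M] [Module R M] {B : LinearMap.BilinForm R M} {v : ι → M} (hB : B.IsOrthoᵢ v)
    (c : ι → R) :
    B (∑ i, c i • v i) (∑ i, c i • v i) = ∑ i, c i * c i * B (v i) (v i) := by
  simp only [map_sum, LinearMap.sum_apply, map_smul, LinearMap.smul_apply, smul_eq_mul]
  refine Finset.sum_congr rfl fun j _ => ?_
  rw [Finset.sum_eq_single j (fun i _ hij => by rw [hB hij, mul_zero])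
    (fun h => absurd (Finset.mem_univ j) h)]
  ring

theorem apply_self_neg_of_mem_span_of_isOrthoᵢ {ι K M : Type*} [Fintype ι] [CommRing K]
    [LinearOrder K] [IsStrictOrderedRing K] [AddCommGroup M] [Module K M]
    {B : LinearMap.BilinForm K M} {v : ι → M} (hB : B.IsOrthoᵢ v) (hneg : ∀ i, B (v i) (v i) < 0)
    {w : M} (hw : w ∈ Submodule.span K (Set.range v)) (hw0 : w ≠ 0) : B w w < 0 := by
  obtain ⟨c, rfl⟩ := (Submodule.mem_span_range_iff_exists_fun K).mp hw
  obtain ⟨i, hi⟩ : ∃ i, c i ≠ 0 := by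
    by_contra! h
    simp [h] at hw0
  rw [apply_sum_smul_self_of_isOrthoᵢ hB, ← Finset.sum_const_zero]
  refine Finset.sum_lt_sum (fun j _ => ?_) ⟨i, Finset.mem_univ _, ?_⟩
  · exact mul_nonpos_of_nonneg_of_nonpos (mul_self_nonneg _) (hneg j).le
  · exact mul_neg_of_pos_of_neg (mul_self_pos.mpr hi) (hneg i)

theorem exists_negDefinite_le_finrank_inf_eq_one_iff {ι K M : Type*} [Fintype ι] [Field K]
    [LinearOrder K] [IsStrictOrderedRing K] [AddCommGroup M] [Module K M]
    (B : LinearMap.BilinForm K M) (V : Submodule K M) {P : ι → Submodule K M} (hP : iSupIndep P)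
    (horth : ∀ i j, i ≠ j → ∀ x ∈ P i, ∀ y ∈ P j, B x y = 0) :
    (∃ W : Submodule K M, Module.finrank K W = Fintype.card ι ∧
        (∀ w ∈ W, w ≠ 0 → B w w < 0) ∧ W ≤ V ∧ ∀ i, Module.finrank K ↥(W ⊓ P i) = 1) ↔
      ∀ i, ∃ v ∈ P i ⊓ V, B v v < 0 := by
  constructor
  · rintro ⟨W, -, hWneg, hWV, hWP⟩ i
    have hne : W ⊓ P i ≠ ⊥ := fun h => by
      have := hWP i
      rw [h, finrank_bot] at this
      exact zero_ne_one this
    obtain ⟨x, hx, hx0⟩ := Submodule.exists_mem_ne_zero_of_ne_bot hne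
    exact ⟨x, ⟨hx.2, hWV hx.1⟩, hWneg x hx.1 hx0⟩
  · intro hv
    choose v hvPV hvneg using hv
    have hvP : ∀ i, v i ∈ P i := fun i => (hvPV i).1
    have hv0 : ∀ i, v i ≠ 0 := fun i h => by simpa [h] using hvneg i
    have hortho : B.IsOrthoᵢ v := fun i j hij => horth i j hij _ (hvP i) _ (hvP j)
    refine ⟨Submodule.span K (Set.range v), ?_, fun w hw hw0 => ?_, ?_, fun i => ?_⟩
    · exact finrank_span_eq_card (hP.linearIndependent P hvP hv0)
    · exact apply_self_neg_of_mem_span_of_isOrthoᵢ hortho hvneg hw hw0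
    · exact Submodule.span_le.2 (Set.range_subset_iff.2 fun i => (hvPV i).2)
    · rw [hP.span_range_inf_eq hvP, finrank_span_singleton (hv0 i)]

end LinearMap.BilinForm

theorem flat_meets_fixed_set_iff_general (p q : ℕ)
    (V : Submodule ℝ (Fin (p + q) → ℝ))
    (P : Fin p → Submodule ℝ (Fin (p + q) → ℝ)) (Prest : Submodule ℝ (Fin (p + q) → ℝ))
    (hindep : iSupIndep (fun o : Option (Fin p) => o.elim Prest P))
    (horth : ∀ o o' : Option (Fin p), o ≠ o' →
      ∀ x ∈ o.elim Prest P, ∀ y ∈ o'.elim Prest P, x ⬝ᵥ (Qpq p q) *ᵥ y = 0) :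
    (∃ W : Submodule ℝ (Fin (p + q) → ℝ), Module.finrank ℝ W = p ∧
        (∀ w ∈ W, w ≠ 0 → w ⬝ᵥ (Qpq p q) *ᵥ w < 0) ∧ W ≤ V ∧
        (∀ i, Module.finrank ℝ ↥(W ⊓ P i) = 1)) ↔
    (∀ i, ∃ v ∈ P i ⊓ V, v ⬝ᵥ (Qpq p q) *ᵥ v < 0) := by
  have hP : iSupIndep P := hindep.comp (Option.some_injective _)
  have hPorth (i j : Fin p) (hij : i ≠ j) : ∀ x ∈ P i, ∀ y ∈ P j, x ⬝ᵥ (Qpq p q) *ᵥ y = 0 :=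
    horth (some i) (some j) (Option.some_injective _ |>.ne hij)
  simpa only [Fintype.card_fin, Matrix.toLinearMap₂'_apply'] using
    LinearMap.BilinForm.exists_negDefinite_le_finrank_inf_eq_one_iff
      (toLinearMap₂' ℝ (Qpq p q)) V hP
      (by simpa only [Matrix.toLinearMap₂'_apply'] using hPorth)

/-- a maximal flat (given by the `𝒬`-orthogonal decomposition
`ℝⁿ = P₁ ⊕ ⋯ ⊕ P_p ⊕ P_rest`) meets the fixed point set determined by the hyperplane `V`
iff each `P_i ∩ V` contains a 𝒬-negative vector. -/
theorem flat_meets_fixed_set_iff (p q : ℕ) (hp : 1 ≤ p) (hpq : p ≤ q)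
    (V L : Submodule ℝ (Fin (p + q) → ℝ))
    (hVdim : Module.finrank ℝ V = p + q - 1)
    (hL : ∀ w, w ∈ L ↔ ∀ v ∈ V, v ⬝ᵥ (Qpq p q) *ᵥ w = 0)
    (hcompl : IsCompl V L)
    (hLpos : ∀ w ∈ L, w ≠ 0 → 0 < w ⬝ᵥ (Qpq p q) *ᵥ w)
    (P : Fin p → Submodule ℝ (Fin (p + q) → ℝ)) (Prest : Submodule ℝ (Fin (p + q) → ℝ))
    (hindep : iSupIndep (fun o : Option (Fin p) => o.elim Prest P))
    (hspan : (⨆ o : Option (Fin p), o.elim Prest P) = ⊤)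
    (horth : ∀ o o' : Option (Fin p), o ≠ o' →
      ∀ x ∈ o.elim Prest P, ∀ y ∈ o'.elim Prest P, x ⬝ᵥ (Qpq p q) *ᵥ y = 0)
    (hPdim : ∀ i, Module.finrank ℝ (P i) = 2)
    (hsig : ∀ i, (∃ x ∈ P i, 0 < x ⬝ᵥ (Qpq p q) *ᵥ x) ∧ (∃ x ∈ P i, x ⬝ᵥ (Qpq p q) *ᵥ x < 0) ∧
      (∀ x ∈ P i, (∀ y ∈ P i, x ⬝ᵥ (Qpq p q) *ᵥ y = 0) → x = 0)) :
    (∃ W : Submodule ℝ (Fin (p + q) → ℝ), Module.finrank ℝ W = p ∧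
        (∀ w ∈ W, w ≠ 0 → w ⬝ᵥ (Qpq p q) *ᵥ w < 0) ∧ W ≤ V ∧
        (∀ i, Module.finrank ℝ ↥(W ⊓ P i) = 1)) ↔
    (∀ i, ∃ v ∈ P i ⊓ V, v ⬝ᵥ (Qpq p q) *ᵥ v < 0) :=
  flat_meets_fixed_set_iff_general p q V P Prest hindep horth
end

section
/- Let 2 ≤ p ≤ q and n = p + q, and let 𝒬 be the quadratic form 𝒬(v) = vᵀQ_{p,q}v on ℝⁿ. Let V₁, …, V_r ⊂ ℝⁿ be hyperplanes with V_i ≠ V₁ for all i ≥ 2, and suppose that ℝⁿ = V₁ ⊕ L₁, where L₁ is the 𝒬-orthogonal complement of V₁, and that L₁ is spanned by a vector w with 𝒬(w) > 0. Then there exists v₁ ∈ V₁ with 𝒬(v₁) < 0 such that for every i ∈ {2, …, r} and every nonzero vector v in span(v₁, w) ∩ V_i one has 𝒬(v) > 0. -/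
/-!
Let `B` be the polar form of `𝒬` and `V_i = ker f_i`. Since `V₁ = w^⊥` with `𝒬(w) > 0`, the
form is nondegenerate and indefinite on `V₁`, and every hyperplane of `V₁` still contains a
negative vector: project a negative plane of `ℝⁿ` onto `V₁`, which can only decrease `𝒬`.
For `v₁ ∈ V₁`, the requirement on `span(v₁, w) ∩ V_i` reads
`𝒬(w) f_i(v₁)² + f_i(w)² 𝒬(v₁) > 0`. It holds at an isotropic `v₁` with all `f_i(v₁) ≠ 0`, and
survives pushing `v₁` slightly into the negative cone. Such an isotropic vector exists: for a
fixed isotropic `z₀ ≠ 0` the vectors `𝒬(y) z₀ - 2 B(z₀, y) y` are isotropic, their images under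
the `f_i` are nonzero quadratic forms in `y`, and finitely many nonzero quadratic forms over an
infinite field have a common non-zero.
-/

open Matrix

open Module Submodule LinearMap

lemma finite_setOf_quadratic_eq_zero {K : Type*} [Field K] {a b c : K} (h : a ≠ 0 ∨ c ≠ 0) :
    {t : K | a * t ^ 2 + b * t + c = 0}.Finite := by
  open Polynomial in
  have hP : C a * X ^ 2 + C b * X + C c ≠ 0 := by
    intro h0
    rcases h with h | h
    · exact h (by simpa [coeff_X, coeff_C] using congrArg (coeff · 2) h0)
    · exact h (by simpa [coeff_X, coeff_C] using congrArg (coeff · 0) h0)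
  convert finite_setOfPred_isRoot hP using 2
  simp

lemma QuadraticMap.apply_add_smul {K M : Type*} [CommRing K] [AddCommGroup M] [Module K M]
    (P : QuadraticMap K M K) (x y : M) (t : K) :
    P (x + t • y) = P y * t ^ 2 + polar P x y * t + P x := by
  rw [QuadraticMap.map_add (⇑P), QuadraticMap.map_smul, QuadraticMap.polar_smul_right,
    smul_eq_mul]
  ring

theorem QuadraticMap.exists_mem_forall_apply_ne_zero {K M ι : Type*} [Field K] [Infinite K]
    [AddCommGroup M] [Module K M] (P : ι → QuadraticMap K M K) (W : Submodule K M)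
    (s : Finset ι) (h : ∀ i ∈ s, ∃ y ∈ W, P i y ≠ 0) :
    ∃ y ∈ W, ∀ i ∈ s, P i y ≠ 0 := by
  classical
  induction s using Finset.induction_on with
  | empty => exact ⟨0, W.zero_mem, by simp⟩
  | @insert j s _ ih =>
    obtain ⟨y, hy, hys⟩ := ih fun i hi => h i (Finset.mem_insert_of_mem hi)
    obtain ⟨y', hy', hy'j⟩ := h j (Finset.mem_insert_self j s)
    have hroots : (⋃ i ∈ insert j s, {t : K | P i (y + t • y') = 0}).Finite := by
      refine (Finset.finite_toSet _).biUnion fun i hi => ?_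
      simp_rw [apply_add_smul]
      refine finite_setOf_quadratic_eq_zero ?_
      rcases Finset.mem_insert.1 hi with rfl | hi
      exacts [Or.inl hy'j, Or.inr (hys i hi)]
    obtain ⟨t, ht⟩ := hroots.infinite_compl.nonempty
    refine ⟨y + t • y', W.add_mem hy (W.smul_mem t hy'), fun i hi hzero => ht ?_⟩
    exact Set.mem_biUnion hi hzero

lemma LinearMap.exists_mem_apply_ne_zero_and_apply_ne_zero {K M : Type*} [Field K]
    [AddCommGroup M] [Module K M] {f g : M →ₗ[K] K} {W : Submodule K M}
    (hf : ∃ y ∈ W, f y ≠ 0) (hg : ∃ y ∈ W, g y ≠ 0) : ∃ y ∈ W, f y ≠ 0 ∧ g y ≠ 0 := by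
  obtain ⟨y₁, hy₁, hfy₁⟩ := hf
  obtain ⟨y₂, hy₂, hgy₂⟩ := hg
  by_cases hgy₁ : g y₁ = 0
  · by_cases hfy₂ : f y₂ = 0
    · exact ⟨y₁ + y₂, W.add_mem hy₁ hy₂, by simpa [hfy₂], by simpa [hgy₁]⟩
    · exact ⟨y₂, hy₂, hfy₂, hgy₂⟩
  · exact ⟨y₁, hy₁, hfy₁, hgy₁⟩

lemma LinearMap.exists_smul_add_smul_eq_zero {K M : Type*} [Field K] [AddCommGroup M]
    [Module K M] (f : M →ₗ[K] K) (x y : M) :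
    ∃ s t : K, (s ≠ 0 ∨ t ≠ 0) ∧ f (s • x + t • y) = 0 := by
  by_cases h : f x = 0 ∧ f y = 0
  · exact ⟨1, 0, Or.inl one_ne_zero, by simp [h.1]⟩
  · refine ⟨f y, -f x, ?_, ?_⟩
    · rw [neg_ne_zero]; tauto
    · simp only [map_add, map_smul, smul_eq_mul]; ring

lemma Submodule.exists_ker_eq_of_finrank_add_one {K E : Type*} [Field K] [AddCommGroup E]
    [Module K E] [FiniteDimensional K E] (U : Submodule K E)
    (hU : finrank K U + 1 = finrank K E) : ∃ f : E →ₗ[K] K, ker f = U := by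
  have hq : finrank K (E ⧸ U) = finrank K K := by
    have := U.finrank_quotient_add_finrank
    rw [finrank_self]
    omega
  obtain ⟨e⟩ := FiniteDimensional.nonempty_linearEquiv_of_finrank_eq hq
  exact ⟨e.toLinearMap ∘ₗ U.mkQ, by rw [ker_comp, LinearEquiv.ker, comap_bot, ker_mkQ]⟩

lemma Submodule.exists_mem_apply_ne_zero_of_ne {K E : Type*} [Field K] [AddCommGroup E]
    [Module K E] [FiniteDimensional K E] {U U' : Submodule K E} {f : E →ₗ[K] K}
    (hf : ker f = U') (hUU' : finrank K U = finrank K U') (hne : U ≠ U') :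
    ∃ y ∈ U, f y ≠ 0 := by
  by_contra! h
  exact hne (eq_of_le_of_finrank_eq (fun y hy => hf ▸ h y hy) hUU')

lemma Matrix.toBilin'_diagonal_smul_single_add_smul_single {n R : Type*} [Fintype n]
    [DecidableEq n] [CommRing R] (d : n → R) {i j : n} (hij : i ≠ j) (s t : R) :
    toBilin' (diagonal d) (s • Pi.single i 1 + t • Pi.single j 1)
      (s • Pi.single i 1 + t • Pi.single j 1) = d i * s ^ 2 + d j * t ^ 2 := by
  simp only [map_add, map_smul, LinearMap.add_apply, LinearMap.smul_apply, toBilin'_single,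
    diagonal_apply_eq, diagonal_apply_ne _ hij, diagonal_apply_ne _ hij.symm, smul_eq_mul]
  ring

namespace LinearMap.BilinForm

lemma IsSymm.apply_smul_sub_smul_self {K M : Type*} [CommRing K] [AddCommGroup M] [Module K M]
    {B : LinearMap.BilinForm K M} (hB : B.IsSymm) {z : M} (hz : B z z = 0) (y : M) :
    B (B y y • z - (2 * B z y) • y) (B y y • z - (2 * B z y) • y) = 0 := by
  simp only [map_sub, map_smul, LinearMap.sub_apply, LinearMap.smul_apply, smul_eq_mul, hz,
    hB.eq y z]
  ring

variable {E : Type*} [AddCommGroup E] [Module ℝ E] {B : LinearMap.BilinForm ℝ E}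

lemma apply_add_smul_self (hB : B.IsSymm) (x y : E) (t : ℝ) :
    B (x + t • y) (x + t • y) = B x x + 2 * t * B x y + t ^ 2 * B y y := by
  simp only [map_add, map_smul, LinearMap.add_apply, LinearMap.smul_apply, smul_eq_mul,
    hB.eq y x]
  ring

lemma exists_isotropic_mem (hB : B.IsSymm) {W : Submodule ℝ E} {u x : E} (hu : u ∈ W)
    (hx : x ∈ W) (hBu : B u u < 0) (hBx : 0 < B x x) : ∃ z ∈ W, z ≠ 0 ∧ B z z = 0 := by
  have hdisc : 0 ≤ discrim (B x x) (2 * B u x) (B u u) := by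
    unfold discrim; nlinarith [sq_nonneg (B u x)]
  obtain ⟨t, ht⟩ := exists_quadratic_eq_zero hBx.ne'
    ⟨_, (Real.mul_self_sqrt hdisc).symm⟩
  have hnull : B (u + t • x) (u + t • x) = 0 := by
    rw [apply_add_smul_self hB]; linear_combination ht
  refine ⟨u + t • x, W.add_mem hu (W.smul_mem t hx), fun h0 => ?_, hnull⟩
  rw [add_eq_zero_iff_eq_neg.1 h0] at hBu
  simp only [map_neg, map_smul, LinearMap.neg_apply, LinearMap.smul_apply, smul_eq_mul]
    at hBu
  nlinarith [sq_nonneg t]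

/-- On `span {v₁, w}` with `v₁ ⊥ w`, the kernel of `f` is spanned by `f w • v₁ - f v₁ • w`,
whose square is `f w ^ 2 * B v₁ v₁ + f v₁ ^ 2 * B w w`. -/
lemma pos_of_mem_span_pair_of_apply_eq_zero (hB : B.IsSymm) (f : E →ₗ[ℝ] ℝ) {v₁ w v : E}
    (horth : B v₁ w = 0) (hw : 0 < B w w) (hf : 0 < B w w * f v₁ ^ 2 + f w ^ 2 * B v₁ v₁)
    (hv : v ∈ span ℝ {v₁, w}) (hfv : f v = 0) (hv0 : v ≠ 0) : 0 < B v v := by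
  obtain ⟨a, b, rfl⟩ := mem_span_pair.1 hv
  have hlin : a * f v₁ + b * f w = 0 := by simpa using hfv
  have hBv : B (a • v₁ + b • w) (a • v₁ + b • w) = a ^ 2 * B v₁ v₁ + b ^ 2 * B w w := by
    simp only [map_add, map_smul, LinearMap.add_apply, LinearMap.smul_apply, smul_eq_mul,
      horth, hB.eq w v₁]
    ring
  rw [hBv]
  by_cases hfw : f w = 0
  · have hfv₁ : f v₁ ≠ 0 := fun h => by simp [h, hfw] at hf
    have ha : a = 0 := by simpa [hfw, hfv₁] using hlin
    have hb : b ≠ 0 := fun hb => hv0 (by simp [ha, hb])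
    rw [ha, zero_pow two_ne_zero, zero_mul, zero_add]
    exact mul_pos (sq_pos_of_ne_zero hb) hw
  · have ha : a ≠ 0 := fun ha => hv0 (by simp_all)
    have key : (a ^ 2 * B v₁ v₁ + b ^ 2 * B w w) * f w ^ 2
        = a ^ 2 * (B w w * f v₁ ^ 2 + f w ^ 2 * B v₁ v₁) := by
      linear_combination B w w * (b * f w - a * f v₁) * hlin
    have : 0 < (a ^ 2 * B v₁ v₁ + b ^ 2 * B w w) * f w ^ 2 := by
      rw [key]; exact mul_pos (sq_pos_of_ne_zero ha) hf
    exact pos_of_mul_pos_left this (sq_nonneg _)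

/-- The sign of `t` is chosen so that the cross term `2 * t * B z u` is nonpositive; the conditions
on `f i` hold at `t = 0` and are open. -/
lemma exists_neg_near_isotropic (hB : B.IsSymm) {ι : Type*} (s : Finset ι)
    (f : ι → E →ₗ[ℝ] ℝ) (c : ι → ℝ) {a : ℝ} (ha : 0 < a) {z u : E} (hz : B z z = 0)
    (hu : B u u < 0) (hfz : ∀ i ∈ s, f i z ≠ 0) :
    ∃ t : ℝ, B (z + t • u) (z + t • u) < 0 ∧
      ∀ i ∈ s, 0 < a * f i (z + t • u) ^ 2 + c i * B (z + t • u) (z + t • u) := by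
  obtain ⟨σ, hσ, hσu⟩ : ∃ σ : ℝ, σ ^ 2 = 1 ∧ σ * B z u ≤ 0 :=
    (le_total 0 (B z u)).elim (fun h => ⟨-1, by norm_num, by linarith⟩)
      (fun h => ⟨1, by norm_num, by linarith⟩)
  have hQ : ∀ τ : ℝ, B (z + (σ * τ) • u) (z + (σ * τ) • u)
      = 2 * τ * (σ * B z u) + τ ^ 2 * B u u := by
    intro τ
    rw [apply_add_smul_self hB, hz]
    linear_combination τ ^ 2 * B u u * hσ
  have hneg : ∀ᶠ τ : ℝ in nhdsWithin 0 (Set.Ioi 0),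
      B (z + (σ * τ) • u) (z + (σ * τ) • u) < 0 := by
    filter_upwards [self_mem_nhdsWithin] with τ (hτ : 0 < τ)
    rw [hQ]
    nlinarith [mul_pos (mul_pos hτ hτ) (neg_pos.2 hu)]
  have hcond : ∀ᶠ τ : ℝ in nhds 0, ∀ i ∈ s, 0 < a * f i (z + (σ * τ) • u) ^ 2
      + c i * B (z + (σ * τ) • u) (z + (σ * τ) • u) := by
    refine (Filter.eventually_all_finset s).2 fun i hi => ?_
    simp_rw [hQ, map_add, map_smul, smul_eq_mul]
    refine ContinuousAt.eventually_lt (by fun_prop) (by fun_prop) ?_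
    simpa using mul_pos ha (sq_pos_of_ne_zero (hfz i hi))
  obtain ⟨τ, hτneg, hτcond⟩ := (hneg.and (nhdsWithin_le_nhds hcond)).exists
  exact ⟨σ * τ, hτneg, hτcond⟩

section Complement

variable {V L : Submodule ℝ E} (hcompl : IsCompl V L)
include hcompl

lemma apply_projection_self_le (hB : B.IsSymm) (hVL : ∀ v ∈ V, ∀ l ∈ L, B v l = 0)
    (hL : ∀ l ∈ L, 0 ≤ B l l) (e : E) :
    B (V.projection L hcompl e) (V.projection L hcompl e) ≤ B e e := by
  have hl := projection_apply_mem hcompl.symm e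
  have hal := hVL _ (projection_apply_mem hcompl e) _ hl
  conv_rhs => rw [← projection_add_projection_eq_self hcompl e]
  simp only [map_add, LinearMap.add_apply, hal, hB.eq (L.projection V _ e), zero_add, add_zero]
  linarith [hL _ hl]

lemma exists_mem_apply_eq_zero_and_neg (hB : B.IsSymm) (hVL : ∀ v ∈ V, ∀ l ∈ L, B v l = 0)
    (hL : ∀ l ∈ L, 0 ≤ B l l) (hneg : ∀ ℓ : E →ₗ[ℝ] ℝ, ∃ e, ℓ e = 0 ∧ B e e < 0)
    (ℓ : E →ₗ[ℝ] ℝ) : ∃ y ∈ V, ℓ y = 0 ∧ B y y < 0 := by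
  obtain ⟨e, hℓe, he⟩ := hneg (ℓ ∘ₗ V.projection L hcompl)
  exact ⟨_, projection_apply_mem hcompl e, hℓe,
    (apply_projection_self_le hcompl hB hVL hL e).trans_lt he⟩

lemma mem_of_apply_eq_zero {w e : E} (hw : L = span ℝ {w}) (hVw : ∀ v ∈ V, B v w = 0)
    (hww : B w w ≠ 0) (he : B e w = 0) : e ∈ V := by
  have hl : L.projection V hcompl.symm e ∈ span ℝ {w} := hw ▸ projection_apply_mem hcompl.symm e
  obtain ⟨c, hc⟩ := mem_span_singleton.1 hl
  rw [← projection_add_projection_eq_self hcompl e, ← hc] at he ⊢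
  have hc0 : c = 0 := by
    simpa [hVw _ (projection_apply_mem hcompl e), hww] using he
  simp [hc0]

lemma exists_mem_apply_ne_zero_of_isCompl (hB : B.IsSymm)
    (hL : ∀ x, x ∈ L ↔ ∀ v ∈ V, B v x = 0) {z : E} (hz : z ∈ V) (hz0 : z ≠ 0) :
    ∃ y ∈ V, B z y ≠ 0 := by
  by_contra! h
  exact hz0 (disjoint_def.1 hcompl.disjoint z hz ((hL z).2 fun v hv => hB.eq v z ▸ h v hv))

end Complement

/-- `B y y • z₀ - (2 * B z₀ y) • y` is the second point where the line through the isotropic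
vector `z₀` in direction `y` meets the null cone. -/
theorem exists_isotropic_mem_forall_apply_ne_zero (hB : B.IsSymm) {W : Submodule ℝ E}
    (hnondeg : ∀ z ∈ W, z ≠ 0 → ∃ y ∈ W, B z y ≠ 0)
    (hneg : ∀ ℓ : E →ₗ[ℝ] ℝ, ∃ y ∈ W, ℓ y = 0 ∧ B y y < 0) (hpos : ∃ x ∈ W, 0 < B x x)
    {ι : Type*} (s : Finset ι) (f : ι → E →ₗ[ℝ] ℝ) (hf : ∀ i ∈ s, ∃ y ∈ W, f i y ≠ 0) :
    ∃ z ∈ W, B z z = 0 ∧ ∀ i ∈ s, f i z ≠ 0 := by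
  obtain ⟨u, hu, -, hBu⟩ := hneg 0
  obtain ⟨x, hx, hBx⟩ := hpos
  obtain ⟨z₀, hz₀, hz₀0, hBz₀⟩ := exists_isotropic_mem hB hu hx hBu hBx
  let P (i : ι) : QuadraticMap ℝ E ℝ :=
    f i z₀ • B.toQuadraticMap - (2 : ℝ) • QuadraticMap.linMulLin (B z₀) (f i)
  have hP (i : ι) (y : E) : P i y = f i (B y y • z₀ - (2 * B z₀ y) • y) := by
    simp only [P, _root_.sub_apply, _root_.smul_apply,
      BilinMap.toQuadraticMap_apply, QuadraticMap.linMulLin_apply, map_sub, map_smul, smul_eq_mul]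
    ring
  have hPne : ∀ i ∈ s, ∃ y ∈ W, P i y ≠ 0 := by
    intro i hi
    by_cases hfz₀ : f i z₀ = 0
    · obtain ⟨y, hy, hBy, hfy⟩ :=
        exists_mem_apply_ne_zero_and_apply_ne_zero (hnondeg z₀ hz₀ hz₀0) (hf i hi)
      exact ⟨y, hy, by simp [hP, hfz₀, hBy, hfy]⟩
    · obtain ⟨y, hy, hBy, hyy⟩ := hneg (B z₀)
      exact ⟨y, hy, by simp [hP, hfz₀, hBy, hyy.ne]⟩
  obtain ⟨y, hy, hPy⟩ := QuadraticMap.exists_mem_forall_apply_ne_zero P W s hPne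
  exact ⟨B y y • z₀ - (2 * B z₀ y) • y, W.sub_mem (W.smul_mem _ hz₀) (W.smul_mem _ hy),
    hB.apply_smul_sub_smul_self hBz₀ y, fun i hi => hP i y ▸ hPy i hi⟩

end LinearMap.BilinForm

open LinearMap.BilinForm

section Qpq

variable (p q : ℕ)

lemma Qpq_isSymm : (toBilin' (Qpq p q)).IsSymm :=
  isSymm_toBilin'_iff_isSymm.2 (isSymm_diagonal _)

variable {p q}

lemma exists_Qpq_neg_of_apply_eq_zero (hp : 2 ≤ p) (ℓ : (Fin (p + q) → ℝ) →ₗ[ℝ] ℝ) :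
    ∃ e, ℓ e = 0 ∧ toBilin' (Qpq p q) e e < 0 := by
  obtain ⟨s, t, hst, hℓ⟩ := ℓ.exists_smul_add_smul_eq_zero
    (Pi.single ⟨0, by omega⟩ 1) (Pi.single ⟨1, by omega⟩ 1)
  refine ⟨_, hℓ, ?_⟩
  rw [Qpq, toBilin'_diagonal_smul_single_add_smul_single _ (by simp [Fin.ext_iff])]
  simp only [if_pos (by omega : 0 < p), if_pos (by omega : 1 < p)]
  rcases hst with h | h <;> nlinarith [sq_pos_of_ne_zero h, sq_nonneg s, sq_nonneg t]

lemma exists_Qpq_pos_of_apply_eq_zero (hq : 2 ≤ q) (ℓ : (Fin (p + q) → ℝ) →ₗ[ℝ] ℝ) :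
    ∃ e, ℓ e = 0 ∧ 0 < toBilin' (Qpq p q) e e := by
  obtain ⟨s, t, hst, hℓ⟩ := ℓ.exists_smul_add_smul_eq_zero
    (Pi.single ⟨p, by omega⟩ 1) (Pi.single ⟨p + 1, by omega⟩ 1)
  refine ⟨_, hℓ, ?_⟩
  rw [Qpq, toBilin'_diagonal_smul_single_add_smul_single _ (by simp [Fin.ext_iff])]
  simp only [lt_irrefl, if_false, if_neg (by omega : ¬ p + 1 < p)]
  rcases hst with h | h <;> nlinarith [sq_pos_of_ne_zero h, sq_nonneg s, sq_nonneg t]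

end Qpq

/-- given hyperplanes `V₁, …, V_r` with `V_i ≠ V₁` for `i ≥ 2`, where
`ℝⁿ = V₁ ⊕ L₁` with `L₁` the `𝒬`-orthogonal complement of `V₁` spanned by a `𝒬`-positive
vector `w`, there is `v₁ ∈ V₁` with `𝒬(v₁) < 0` such that every nonzero vector of
`span(v₁, w) ∩ V_i` (`i ≥ 2`) is `𝒬`-positive. -/
theorem exists_good_negative_vector (p q r : ℕ) (hp : 2 ≤ p) (hpq : p ≤ q) (hr : 1 ≤ r)
    (V : Fin r → Submodule ℝ (Fin (p + q) → ℝ))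
    (hVdim : ∀ i, Module.finrank ℝ (V i) = p + q - 1)
    (hne : ∀ i : Fin r, i ≠ ⟨0, hr⟩ → V i ≠ V ⟨0, hr⟩)
    (L : Submodule ℝ (Fin (p + q) → ℝ))
    (hL : ∀ x, x ∈ L ↔ ∀ v ∈ V ⟨0, hr⟩, v ⬝ᵥ (Qpq p q) *ᵥ x = 0)
    (hcompl : IsCompl (V ⟨0, hr⟩) L)
    (w : Fin (p + q) → ℝ) (hw : L = Submodule.span ℝ {w})
    (hwpos : 0 < w ⬝ᵥ (Qpq p q) *ᵥ w) :
    ∃ v₁ ∈ V ⟨0, hr⟩, v₁ ⬝ᵥ (Qpq p q) *ᵥ v₁ < 0 ∧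
      ∀ i : Fin r, i ≠ ⟨0, hr⟩ →
        ∀ v ∈ Submodule.span ℝ {v₁, w} ⊓ V i, v ≠ 0 → 0 < v ⬝ᵥ (Qpq p q) *ᵥ v := by
  simp only [← toBilin'_apply'] at hL hwpos ⊢
  set B := toBilin' (Qpq p q)
  set V₀ := V ⟨0, hr⟩
  have hB : B.IsSymm := Qpq_isSymm p q
  have hV₀w : ∀ v ∈ V₀, B v w = 0 := (hL w).1 (hw ▸ mem_span_singleton_self w)
  have hLnonneg : ∀ l ∈ L, 0 ≤ B l l := by
    intro l hl
    obtain ⟨c, rfl⟩ := mem_span_singleton.1 (hw ▸ hl)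
    simpa [← mul_assoc] using mul_nonneg (mul_self_nonneg c) hwpos.le
  have hneg := exists_mem_apply_eq_zero_and_neg hcompl hB (fun v hv l hl => (hL l).1 hl v hv)
    hLnonneg (exists_Qpq_neg_of_apply_eq_zero hp)
  obtain ⟨x, hx0, hx⟩ := exists_Qpq_pos_of_apply_eq_zero (q := q) (by omega) (B.flip w)
  choose f hf using fun i => (V i).exists_ker_eq_of_finrank_add_one
    (by simp only [hVdim, finrank_fintype_fun_eq_card, Fintype.card_fin]; omega)
  have hfV₀ (i) (hi : i ∈ Finset.univ.erase ⟨0, hr⟩) : ∃ y ∈ V₀, f i y ≠ 0 :=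
    exists_mem_apply_ne_zero_of_ne (hf i) (by rw [hVdim, hVdim])
      (hne i (Finset.ne_of_mem_erase hi)).symm
  obtain ⟨z, hzV₀, hz, hfz⟩ := exists_isotropic_mem_forall_apply_ne_zero hB
    (fun _ => exists_mem_apply_ne_zero_of_isCompl hcompl hB hL) hneg
    ⟨x, mem_of_apply_eq_zero hcompl hw hV₀w hwpos.ne' hx0, hx⟩ _ f hfV₀
  obtain ⟨u, huV₀, -, hu⟩ := hneg 0
  obtain ⟨t, hv₁, hv₁f⟩ := exists_neg_near_isotropic hB _ f (fun i => f i w ^ 2) hwpos hz hu hfz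
  have hv₁V₀ : z + t • u ∈ V₀ := V₀.add_mem hzV₀ (V₀.smul_mem t huV₀)
  refine ⟨z + t • u, hv₁V₀, hv₁, fun i hi v hv hv0 => ?_⟩
  exact pos_of_mem_span_pair_of_apply_eq_zero hB (f i) (hV₀w _ hv₁V₀) hwpos
    (hv₁f i (Finset.mem_erase.2 ⟨hi, Finset.mem_univ i⟩)) (mem_inf.1 hv).1
    (by rw [← LinearMap.mem_ker, hf i]; exact (mem_inf.1 hv).2) hv0
end

section
/- Let n ≥ 2, let d_t, d_s ≥ 0 and r ≥ 0 be integers and d₁, …, d_r positive integers with d_t + d_s + 2(d₁ + ⋯ + d_r) = n, and suppose d_t ≠ n and d_s ≠ n. Then −1 + d_t(d_t + 1)/2 + d_s(d_s + 1)/2 + (d₁² + ⋯ + d_r²) ≤ n(n−1)/2, with equality if and only if r = 0 and {d_t, d_s} = {1, n−1} as a multiset. -/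
/-!
Write `n = a + b + 2s` with `s = ∑ dᵢ` and `q = ∑ dᵢ²`. Then `n(n-1)/2` exceeds the fixed point
dimension by exactly `(a-1)(b-1) + 2(a+b)s + (2s² - s - q)`. Since `q ≤ s²`, this gap is positive
as soon as `s ≥ 1`; when `s = 0` it is `(a-1)(b-1)`, which is nonnegative because `a, b ≥ 1` and
vanishes exactly when one of `a, b` equals `1`.
-/

open Finset

section FixedSetDim

variable {K : Type*} [Field K] [LinearOrder K] [IsStrictOrderedRing K]

/-- `dim S^A` when the `±1`-eigenspaces of `A` have dimensions `a`, `b` and `q = ∑ dᵢ²`. -/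
def fixedSetDim (a b q : K) : K := -1 + a * (a + 1) / 2 + b * (b + 1) / 2 + q

lemma fixedSetDim_add_gap (a b s q : K) :
    fixedSetDim a b q + ((a - 1) * (b - 1) + 2 * (a + b) * s + (2 * s ^ 2 - s - q)) =
      (a + b + 2 * s) * ((a + b + 2 * s) - 1) / 2 := by
  unfold fixedSetDim
  ring

lemma fixedSetDim_lt {a b s q : K} (ha : 0 ≤ a) (hb : 0 ≤ b) (hs : 1 ≤ s) (hq : q ≤ s ^ 2) :
    fixedSetDim a b q < (a + b + 2 * s) * ((a + b + 2 * s) - 1) / 2 := by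
  rw [← fixedSetDim_add_gap a b s q]
  nlinarith [mul_nonneg ha hb, mul_le_mul_of_nonneg_left hs (add_nonneg ha hb),
    mul_nonneg (zero_le_one.trans hs) (sub_nonneg.2 hs)]

lemma fixedSetDim_zero_add (a b : K) :
    fixedSetDim a b 0 + (a - 1) * (b - 1) = (a + b) * ((a + b) - 1) / 2 := by
  simpa using fixedSetDim_add_gap a b 0 0

lemma fixedSetDim_zero_le {a b : K} (ha : 1 ≤ a) (hb : 1 ≤ b) :
    fixedSetDim a b 0 ≤ (a + b) * ((a + b) - 1) / 2 := by
  rw [← fixedSetDim_zero_add]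
  exact le_add_of_nonneg_right (mul_nonneg (sub_nonneg.2 ha) (sub_nonneg.2 hb))

lemma fixedSetDim_zero_eq_iff (a b : K) :
    fixedSetDim a b 0 = (a + b) * ((a + b) - 1) / 2 ↔ a = 1 ∨ b = 1 := by
  rw [← fixedSetDim_zero_add, left_eq_add, mul_eq_zero, sub_eq_zero, sub_eq_zero]

end FixedSetDim

theorem slnr_fixed_point_dim_bound_general (n : ℕ) (dt ds r : ℕ)
    (d : Fin r → ℕ) (hd : ∀ i, 0 < d i)
    (hsum : dt + ds + 2 * ∑ i, d i = n) (hdt : dt ≠ n) (hds : ds ≠ n) :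
    ((-1 : ℚ) + (dt : ℚ) * ((dt : ℚ) + 1) / 2 + (ds : ℚ) * ((ds : ℚ) + 1) / 2
        + ∑ i, (d i : ℚ) ^ 2 ≤ (n : ℚ) * ((n : ℚ) - 1) / 2) ∧
    (((-1 : ℚ) + (dt : ℚ) * ((dt : ℚ) + 1) / 2 + (ds : ℚ) * ((ds : ℚ) + 1) / 2
        + ∑ i, (d i : ℚ) ^ 2 = (n : ℚ) * ((n : ℚ) - 1) / 2) ↔
      (r = 0 ∧ ((dt = 1 ∧ ds = n - 1) ∨ (dt = n - 1 ∧ ds = 1)))) := by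
  change fixedSetDim (dt : ℚ) ds (∑ i, (d i : ℚ) ^ 2) ≤ _ ∧
    (fixedSetDim (dt : ℚ) ds (∑ i, (d i : ℚ) ^ 2) = _ ↔ _)
  rcases Nat.eq_zero_or_pos r with rfl | hr
  · simp only [Fin.sum_univ_zero, mul_zero, add_zero, true_and] at hsum ⊢
    have hn : (n : ℚ) = dt + ds := by exact_mod_cast hsum.symm
    rw [hn, fixedSetDim_zero_eq_iff, Nat.cast_eq_one, Nat.cast_eq_one]
    exact ⟨fixedSetDim_zero_le (by exact_mod_cast (by omega : 1 ≤ dt))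
      (by exact_mod_cast (by omega : 1 ≤ ds)), by omega⟩
  · have hs : (1 : ℚ) ≤ ∑ i, (d i : ℚ) := by
      exact_mod_cast (hd ⟨0, hr⟩).trans_le (single_le_sum (fun i _ ↦ (hd i).le) (mem_univ _))
    have hn : (n : ℚ) = dt + ds + 2 * ∑ i, (d i : ℚ) := by rw [← hsum]; push_cast; rfl
    have hlt := fixedSetDim_lt (Nat.cast_nonneg (α := ℚ) dt) (Nat.cast_nonneg ds) hs
      (sum_sq_le_sq_sum_of_nonneg fun i _ ↦ Nat.cast_nonneg (d i))
    rw [← hn] at hlt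
    exact ⟨hlt.le, iff_of_false hlt.ne (by omega)⟩

/-- arithmetic inequality for fixed point sets in the symmetric space of
`SL(n,ℝ)`:  if `d_t + d_s + 2(d₁ + ⋯ + d_r) = n` with `d_t, d_s ≠ n` and all `dᵢ > 0`, then
`−1 + d_t(d_t+1)/2 + d_s(d_s+1)/2 + ∑ dᵢ² ≤ n(n−1)/2`, with equality iff `r = 0` and
`{d_t, d_s} = {1, n−1}` as a multiset. -/
theorem slnr_fixed_point_dim_bound (n : ℕ) (hn : 2 ≤ n) (dt ds r : ℕ)
    (d : Fin r → ℕ) (hd : ∀ i, 0 < d i)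
    (hsum : dt + ds + 2 * ∑ i, d i = n) (hdt : dt ≠ n) (hds : ds ≠ n) :
    ((-1 : ℚ) + (dt : ℚ) * ((dt : ℚ) + 1) / 2 + (ds : ℚ) * ((ds : ℚ) + 1) / 2
        + ∑ i, (d i : ℚ) ^ 2 ≤ (n : ℚ) * ((n : ℚ) - 1) / 2) ∧
    (((-1 : ℚ) + (dt : ℚ) * ((dt : ℚ) + 1) / 2 + (ds : ℚ) * ((ds : ℚ) + 1) / 2
        + ∑ i, (d i : ℚ) ^ 2 = (n : ℚ) * ((n : ℚ) - 1) / 2) ↔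
      (r = 0 ∧ ((dt = 1 ∧ ds = n - 1) ∨ (dt = n - 1 ∧ ds = 1)))) :=
  slnr_fixed_point_dim_bound_general n dt ds r d hd hsum hdt hds
end

section
/- Let 2 ≤ p ≤ q be integers with p + q ≥ 5. Let p_s, q_s, p_t, q_t ≥ 0 and r ≥ 0 be integers, and let (p₁,q₁), …, (p_r,q_r) be pairs of nonnegative integers with (p_i, q_i) ≠ (0,0) for each i, satisfying p = p_s + p_t + 2(p₁ + ⋯ + p_r) and q = q_s + q_t + 2(q₁ + ⋯ + q_r). Suppose it is not the case that r = 0 and ((p_t, q_t) = (0,0) or (p_s, q_s) = (0,0)). Then p_s·q_s + p_t·q_t + 2(p₁q₁ + ⋯ + p_rq_r) ≤ p(q−1), with equality if and only if r = 0 and one of the following holds: (p_s, q_s) = (0,1); (p_s, q_s) = (p, q−1); p = q and (p_s, q_s) = (1,0); p = q and (p_s, q_s) = (p−1, p). -/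
private lemma add_le_mul_aux (a b : ℕ) (ha : 1 ≤ a) (hb : 1 ≤ b) : a + b ≤ a * b + 1 := by
  obtain ⟨a', rfl⟩ := Nat.exists_eq_add_of_le ha
  obtain ⟨b', rfl⟩ := Nat.exists_eq_add_of_le hb
  have : (1 + a') * (1 + b') = 1 + a' + b' + a' * b' := by ring
  omega

set_option maxHeartbeats 1000000 in
private lemma core_r0 (p q ps qs pt qt : ℕ) (hp : 2 ≤ p) (hpq : p ≤ q) (hn : 5 ≤ p + q)
    (h1 : p = ps + pt) (h2 : q = qs + qt)
    (hA : ¬(pt = 0 ∧ qt = 0)) (hB : ¬(ps = 0 ∧ qs = 0)) :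
    ps + pt ≤ ps * qt + pt * qs ∧
      (ps * qt + pt * qs = ps + pt ↔
        ((ps = 0 ∧ qs = 1) ∨ (ps = p ∧ qs = q - 1) ∨
         (p = q ∧ ps = 1 ∧ qs = 0) ∨ (p = q ∧ ps = p - 1 ∧ qs = p))) := by
  rcases Nat.eq_zero_or_pos qt with hqt | hqt
  · -- qt = 0 : pt ≥ 1, qs = q
    subst hqt
    have hpt : 1 ≤ pt := by omega
    have f1 : pt = 1 → pt * qs = qs := by intro h; simp [h]
    have f2 : 2 ≤ pt → 2 * qs ≤ pt * qs := fun h => Nat.mul_le_mul_right _ h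
    have f3 : qs ≤ pt * qs := Nat.le_mul_of_pos_left _ hpt
    omega
  · rcases Nat.eq_zero_or_pos qs with hqs | hqs
    · -- qs = 0 : ps ≥ 1, qt = q
      subst hqs
      have hps : 1 ≤ ps := by omega
      have f1 : ps = 1 → ps * qt = qt := by intro h; simp [h]
      have f2 : 2 ≤ ps → 2 * qt ≤ ps * qt := fun h => Nat.mul_le_mul_right _ h
      have f3 : qt ≤ ps * qt := Nat.le_mul_of_pos_left _ hps
      omega
    · -- qs ≥ 1, qt ≥ 1
      have f1 : ps = 0 → ps * qt = 0 := by intro h; simp [h]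
      have f2 : qt = 1 → ps * qt = ps := by intro h; simp [h]
      have f3 : 1 ≤ ps → ps + qt ≤ ps * qt + 1 := fun h => add_le_mul_aux ps qt h hqt
      have g1 : pt = 0 → pt * qs = 0 := by intro h; simp [h]
      have g2 : qs = 1 → pt * qs = pt := by intro h; simp [h]
      have g3 : 1 ≤ pt → pt + qs ≤ pt * qs + 1 := fun h => add_le_mul_aux pt qs h hqs
      omega

set_option maxHeartbeats 1000000 in
/-- arithmetic inequality for fixed point sets in the symmetric space of
`SO(p,q)`. -/
theorem sopq_fixed_point_dim_bound (p q : ℕ) (hp : 2 ≤ p) (hpq : p ≤ q) (hn : 5 ≤ p + q)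
    (ps qs pt qt r : ℕ) (pp qq : Fin r → ℕ) (hnz : ∀ i, (pp i, qq i) ≠ (0, 0))
    (hpsum : p = ps + pt + 2 * ∑ i, pp i) (hqsum : q = qs + qt + 2 * ∑ i, qq i)
    (hnc : ¬ (r = 0 ∧ ((pt, qt) = (0, 0) ∨ (ps, qs) = (0, 0)))) :
    (ps * qs + pt * qt + 2 * ∑ i, pp i * qq i ≤ p * (q - 1)) ∧
    ((ps * qs + pt * qt + 2 * ∑ i, pp i * qq i = p * (q - 1)) ↔
      (r = 0 ∧ ((ps, qs) = (0, 1) ∨ (ps, qs) = (p, q - 1) ∨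
        (p = q ∧ (ps, qs) = (1, 0)) ∨ (p = q ∧ (ps, qs) = (p - 1, p))))) := by
  have hpq1 : p * (q - 1) + p = p * q := by
    obtain ⟨q', rfl⟩ : ∃ q', q = q' + 1 := ⟨q - 1, by omega⟩
    simp [Nat.mul_succ]
  rcases Nat.eq_zero_or_pos r with hr | hr
  · -- r = 0
    subst hr
    have hA : ¬(pt = 0 ∧ qt = 0) := fun h => hnc ⟨rfl, Or.inl (by rw [h.1, h.2])⟩
    have hB : ¬(ps = 0 ∧ qs = 0) := fun h => hnc ⟨rfl, Or.inr (by rw [h.1, h.2])⟩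
    simp only [Finset.univ_eq_empty, Finset.sum_empty, mul_zero, add_zero] at hpsum hqsum ⊢
    have hc := core_r0 p q ps qs pt qt hp hpq hn hpsum hqsum hA hB
    have hexp : p * q = ps * qs + pt * qt + (ps * qt + pt * qs) := by
      rw [hpsum, hqsum]; ring
    obtain ⟨hc1, hc2⟩ := hc
    have hred : (ps * qs + pt * qt = p * (q - 1)) ↔ ps * qt + pt * qs = ps + pt := by
      clear hc2; omega
    simp only [Prod.mk.injEq]
    refine ⟨by clear hc2; omega, ?_⟩
    rw [hred, hc2]
    simp
  · -- r ≥ 1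
    set P := ∑ i, pp i with hP
    set Q := ∑ i, qq i with hQ
    set S := ∑ i, pp i * qq i with hSd
    have hS : S ≤ P * Q := by
      calc S ≤ ∑ i, pp i * Q :=
            Finset.sum_le_sum (fun i _ => Nat.mul_le_mul_left _
              (Finset.single_le_sum (fun j _ => Nat.zero_le _) (Finset.mem_univ i)))
        _ = P * Q := by rw [← Finset.sum_mul]
    have hexp : p * q = ps * qs + ps * qt + pt * qs + pt * qt
        + 2 * (ps * Q) + 2 * (pt * Q) + 2 * (P * qs) + 2 * (P * qt) + 4 * (P * Q) := by
      rw [hpsum, hqsum]; ring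
    have key : ps * qs + pt * qt + 2 * S + p + 1 ≤ p * q := by
      rcases Nat.eq_zero_or_pos Q with hq0 | hq1
      · -- Q = 0, so P ≥ 1
        have hP1 : 1 ≤ P := by
          have i0 : Fin r := ⟨0, hr⟩
          have hqq : qq i0 = 0 := by
            have h' : ∑ i, qq i = 0 := by rw [← hQ]; exact hq0
            exact Finset.sum_eq_zero_iff.mp h' i0 (Finset.mem_univ i0)
          have hp1 : 1 ≤ pp i0 := by
            have h2 := hnz i0
            rw [hqq] at h2
            rcases Nat.eq_zero_or_pos (pp i0) with h3 | h3
            · exact absurd (by rw [h3]) h2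
            · exact h3
          calc 1 ≤ pp i0 := hp1
            _ ≤ P := Finset.single_le_sum (fun j _ => Nat.zero_le _) (Finset.mem_univ i0)
        have z1 : ps * Q = 0 := by rw [hq0, mul_zero]
        have z2 : pt * Q = 0 := by rw [hq0, mul_zero]
        have z3 : P * Q = 0 := by rw [hq0, mul_zero]
        rcases Nat.eq_zero_or_pos qt with ht0 | ht1
        · -- qt = 0, qs = q ≥ 3
          have hqs3 : 3 ≤ qs := by omega
          have f1 : pt * 3 ≤ pt * qs := Nat.mul_le_mul_left _ hqs3
          have f2 : P * 3 ≤ P * qs := Nat.mul_le_mul_left _ hqs3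
          have f3 : qs ≤ P * qs := Nat.le_mul_of_pos_left _ hP1
          have z4 : pt * qt = 0 := by rw [ht0, mul_zero]
          omega
        · rcases Nat.eq_zero_or_pos qs with hs0 | hs1
          · -- qs = 0, qt = q ≥ 3
            have hqt3 : 3 ≤ qt := by omega
            have f1 : ps * 3 ≤ ps * qt := Nat.mul_le_mul_left _ hqt3
            have f2 : P * 3 ≤ P * qt := Nat.mul_le_mul_left _ hqt3
            have f3 : qt ≤ P * qt := Nat.le_mul_of_pos_left _ hP1
            have z4 : ps * qs = 0 := by rw [hs0, mul_zero]
            omega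
          · -- qs ≥ 1, qt ≥ 1
            have f1 : ps ≤ ps * qt := Nat.le_mul_of_pos_right _ ht1
            have f2 : pt ≤ pt * qs := Nat.le_mul_of_pos_right _ hs1
            have f3 : P ≤ P * qs := Nat.le_mul_of_pos_right _ hs1
            have f4 : P ≤ P * qt := Nat.le_mul_of_pos_right _ ht1
            omega
      · -- Q ≥ 1
        have m1 : ps ≤ ps * Q := Nat.le_mul_of_pos_right _ hq1
        have m2 : pt ≤ pt * Q := Nat.le_mul_of_pos_right _ hq1
        have m3 : P ≤ P * Q := Nat.le_mul_of_pos_right _ hq1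
        rcases Nat.eq_zero_or_pos (ps + pt) with h0 | h1
        · -- ps = pt = 0, p = 2P ≥ 2
          have hP1 : 1 ≤ P := by omega
          rcases Nat.eq_zero_or_pos (qs + qt) with hqq0 | hqq1
          · -- q = 2Q ≥ 3 so Q ≥ 2
            have hQ2 : 2 ≤ Q := by omega
            have m4 : P * 2 ≤ P * Q := Nat.mul_le_mul_left _ hQ2
            omega
          · rcases Nat.eq_zero_or_pos qs with h | h
            · have m6 : P ≤ P * qt := Nat.le_mul_of_pos_right _ (by omega)
              omega
            · have m5 : P ≤ P * qs := Nat.le_mul_of_pos_right _ h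
              omega
        · omega
    refine ⟨by omega, iff_of_false (by omega) (fun h => absurd h.1 (by omega))⟩
end
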